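/- Let $Q_0:\mathcal{M}\to\mathcal{M}$ satisfy Hypotheses 2 (continuity along locally uniform convergence giving a.e. convergence of images, order preservation, translation invariance, and bistability with middle equilibrium $\alpha\in(0,1)$). Suppose a constant $\underline{c}$ and $\underline{\psi}\in\mathcal{M}$ with $\underline{\psi}(0)=0$ and $\underline{\psi}(+\infty)\in(\alpha,1]$ satisfy $\underline{\psi}(x)\le (Q_0[\underline{\psi}])(x-\underline{c})$ for all $x$, and a constant $\overline{c}$ and $\overline{\psi}\in\mathcal{M}$ with $\overline{\psi}(-\infty)\in[0,\alpha)$ and $\overline{\psi}(0)=1$ satisfy $(Q_0[\overline{\psi}])(x-\overline{c})\le\overline{\psi}(x)$ for all $x$. Then $\underline{c}\le\overline{c}$. -/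

import Mathlib

/-!
Sliding the subsolution along the supersolution. Since `ψu = 0` on `(-∞, 0]` and `ψo = 1` on
`[0, ∞)`, `ψu ≤ ψo`. If `ψu(· + s) ≤ ψo`, then order preservation and translation invariance
give `ψu(· + s + cu - co) ≤ Q0[ψu](· + s - co) ≤ Q0[ψo](· - co) ≤ ψo`, so
`ψu(· + n (cu - co)) ≤ ψo` for every `n`. If `cu > co`, the left side at a point `y` with
`ψo y < α` eventually exceeds `α`, because `ψu(+∞) > α`.
-/

open MeasureTheory Filter Topology

/-- `MemM u` : `u` is monotone nondecreasing, left continuous, with values in `[0,1]`. -/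
def MemM (u : ℝ → ℝ) : Prop :=
  Monotone u ∧ (∀ x : ℝ, Tendsto u (nhdsWithin x (Set.Iio x)) (nhds (u x))) ∧
    ∀ x : ℝ, u x ∈ Set.Icc (0:ℝ) 1

theorem MemM.comp_sub_const {u : ℝ → ℝ} (hu : MemM u) (c : ℝ) : MemM (fun y => u (y - c)) := by
  obtain ⟨hmono, hlc, hbd⟩ := hu
  refine ⟨fun a b hab => hmono (by linarith), fun x => ?_, fun x => hbd _⟩
  have hsub : Tendsto (fun y : ℝ => y - c) (𝓝[<] x) (𝓝[<] (x - c)) :=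
    tendsto_nhdsWithin_of_tendsto_nhds_of_eventually_within _
      ((continuous_sub_right c).tendsto x |>.mono_left nhdsWithin_le_nhds)
      (eventually_nhdsWithin_of_forall fun y hy => sub_lt_sub_right hy c)
  exact (hlc (x - c)).comp hsub

theorem MemM.le_of_eq_zero_of_eq_one {u v : ℝ → ℝ} (hu : MemM u) (hv : MemM v)
    (hu0 : u 0 = 0) (hv0 : v 0 = 1) (x : ℝ) : u x ≤ v x := by
  rcases le_or_gt x 0 with hx | hx
  · linarith [hu.1 hx, (hv.2.2 x).1]
  · linarith [hv.1 hx.le, (hu.2.2 x).2]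

def IsSubsolution (Q : (ℝ → ℝ) → ℝ → ℝ) (c : ℝ) (ψ : ℝ → ℝ) : Prop :=
  ∀ x, ψ x ≤ Q ψ (x - c)

def IsSupersolution (Q : (ℝ → ℝ) → ℝ → ℝ) (c : ℝ) (ψ : ℝ → ℝ) : Prop :=
  ∀ x, Q ψ (x - c) ≤ ψ x

section Sliding

variable {Q : (ℝ → ℝ) → ℝ → ℝ}
  (hord : ∀ u v, MemM u → MemM v → (∀ x, u x ≤ v x) → ∀ x, Q u x ≤ Q v x)
  (htrans : ∀ (c : ℝ) (u : ℝ → ℝ), MemM u → ∀ x, Q (fun y => u (y - c)) x = Q u (x - c))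
  {cu co : ℝ} {ψu ψo : ℝ → ℝ} (hψu : MemM ψu) (hψo : MemM ψo)
  (hsub : IsSubsolution Q cu ψu) (hsup : IsSupersolution Q co ψo)
include hord htrans hψu hψo hsub hsup

theorem IsSubsolution.comp_sub_le_of_comp_sub_le {c : ℝ} (h : ∀ x, ψu (x - c) ≤ ψo x) (x : ℝ) :
    ψu (x - (c - (cu - co))) ≤ ψo x :=
  calc ψu (x - (c - (cu - co)))
      ≤ Q ψu (x - co - c) := by convert hsub (x - (c - (cu - co))) using 2; ring
    _ = Q (fun y => ψu (y - c)) (x - co) := (htrans c ψu hψu (x - co)).symm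
    _ ≤ Q ψo (x - co) := hord _ _ (hψu.comp_sub_const c) hψo h (x - co)
    _ ≤ ψo x := hsup x

theorem IsSubsolution.nat_shift_le (h0 : ∀ x, ψu x ≤ ψo x) (n : ℕ) (x : ℝ) :
    ψu (x + n * (cu - co)) ≤ ψo x := by
  suffices ∀ x, ψu (x - -(n * (cu - co))) ≤ ψo x by simpa using this x
  induction n with
  | zero => simpa using h0
  | succ n ih =>
    intro x
    convert hsub.comp_sub_le_of_comp_sub_le hord htrans hψu hψo hsup ih x using 2
    push_cast
    ring

end Sliding

theorem stmt3_general (Q0 : (ℝ → ℝ) → (ℝ → ℝ)) (α : ℝ)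
    -- Hypotheses 2
    (hord : ∀ u v, MemM u → MemM v → (∀ x, u x ≤ v x) → ∀ x, Q0 u x ≤ Q0 v x)
    (htrans : ∀ (c : ℝ) (u : ℝ → ℝ), MemM u →
      ∀ x, Q0 (fun y => u (y - c)) x = Q0 u (x - c))
    -- sub and super solutions
    (cu co : ℝ) (ψu ψo : ℝ → ℝ) (hψu : MemM ψu) (hψo : MemM ψo)
    (hψu0 : ψu 0 = 0) (Lu : ℝ) (hLu : Tendsto ψu atTop (nhds Lu))
    (hLu' : Lu ∈ Set.Ioc α 1)
    (hsub : ∀ x, ψu x ≤ Q0 ψu (x - cu))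
    (hψo0 : ψo 0 = 1) (Lo : ℝ) (hLo : Tendsto ψo atBot (nhds Lo))
    (hLo' : Lo ∈ Set.Ico (0:ℝ) α)
    (hsup : ∀ x, Q0 ψo (x - co) ≤ ψo x) :
    cu ≤ co := by
  by_contra! hlt
  obtain ⟨x₀, hx₀⟩ : ∃ x, α < ψu x := (hLu.eventually (eventually_gt_nhds hLu'.1)).exists
  obtain ⟨y₀, hy₀⟩ : ∃ y, ψo y < α := (hLo.eventually (eventually_lt_nhds hLo'.2)).exists
  obtain ⟨n, hn⟩ := exists_nat_ge ((x₀ - y₀) / (cu - co))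
  have hreach : x₀ ≤ y₀ + n * (cu - co) := by
    rw [div_le_iff₀ (sub_pos.2 hlt)] at hn
    linarith
  have hslide := IsSubsolution.nat_shift_le hord htrans hψu hψo hsub hsup
    (hψu.le_of_eq_zero_of_eq_one hψo hψu0 hψo0) n y₀
  linarith [hψu.1 hreach]

theorem stmt3 (Q0 : (ℝ → ℝ) → (ℝ → ℝ)) (α : ℝ)
    -- Hypotheses 2
    (hmap : ∀ u, MemM u → MemM (Q0 u))
    (hcont : ∀ (uk : ℕ → ℝ → ℝ) (u : ℝ → ℝ), (∀ k, MemM (uk k)) → MemM u →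
      (∀ a b : ℝ, TendstoUniformlyOn (fun k => uk k) u atTop (Set.Icc a b)) →
      ∀ᵐ x : ℝ ∂volume, Tendsto (fun k => Q0 (uk k) x) atTop (nhds (Q0 u x)))
    (hord : ∀ u v, MemM u → MemM v → (∀ x, u x ≤ v x) → ∀ x, Q0 u x ≤ Q0 v x)
    (htrans : ∀ (c : ℝ) (u : ℝ → ℝ), MemM u →
      ∀ x, Q0 (fun y => u (y - c)) x = Q0 u (x - c))
    (hα : α ∈ Set.Ioo (0:ℝ) 1)
    (hfix : ∀ x, Q0 (fun _ => α) x = α)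
    (hlow : ∀ γ : ℝ, 0 < γ → γ < α → ∀ x, Q0 (fun _ => γ) x < γ)
    (hhigh : ∀ γ : ℝ, α < γ → γ < 1 → ∀ x, γ < Q0 (fun _ => γ) x)
    -- sub and super solutions
    (cu co : ℝ) (ψu ψo : ℝ → ℝ) (hψu : MemM ψu) (hψo : MemM ψo)
    (hψu0 : ψu 0 = 0) (Lu : ℝ) (hLu : Tendsto ψu atTop (nhds Lu))
    (hLu' : Lu ∈ Set.Ioc α 1)
    (hsub : ∀ x, ψu x ≤ Q0 ψu (x - cu))
    (hψo0 : ψo 0 = 1) (Lo : ℝ) (hLo : Tendsto ψo atBot (nhds Lo))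
    (hLo' : Lo ∈ Set.Ico (0:ℝ) α)
    (hsup : ∀ x, Q0 ψo (x - co) ≤ ψo x) :
    cu ≤ co :=
  stmt3_general Q0 α hord htrans cu co ψu ψo hψu hψo hψu0 Lu hLu hLu' hsub hψo0 Lo hLo hLo' hsup
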